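/- arXiv:1706.08182 — 4 statements merged into one kernel-verified Lean document; each statement's English description precedes it below -/
import Mathlib

section
/- Let x̂ be a square-integrable random vector in R^n, C ∈ R^{m×n}, and M ∈ R^{m×m} symmetric positive semidefinite. Suppose Z ∈ R^{n×n} is symmetric positive semidefinite such that for every estimator x̂^e ∈ R^n (constant vector), E[(x̂ − x̂^e)(x̂ − x̂^e)^T] ⪰ Z in the Loewner order. Then inf over constant vectors y ∈ R^m of E[(y − C x̂)^T M (y − C x̂)] ≥ tr(C^T M C Z). -/
/-!
Write `x̂ = e + d` with `e = E[x̂]`. Since `d` has mean zero, the cross terms vanish and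
`E[(y - C x̂)ᵀ M (y - C x̂)] = (y - C e)ᵀ M (y - C e) + tr (Cᵀ M C · E[d dᵀ])`.
The first term is nonnegative, and the hypothesis at the estimator `x̂ᵉ = e` says
`E[d dᵀ] - Z ⪰ 0`, so the second term is at least `tr (Cᵀ M C Z)` because the trace of a
product of two positive semidefinite matrices is nonnegative.
-/

open MeasureTheory Matrix

namespace Matrix.PosSemidef

open scoped ComplexOrder

variable {n 𝕜 : Type*} [Fintype n] [RCLike 𝕜] {A B C : Matrix n n 𝕜}

theorem trace_mul_nonneg (hA : A.PosSemidef) (hB : B.PosSemidef) : 0 ≤ (A * B).trace := by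
  classical
  open scoped MatrixOrder in
  obtain ⟨R, rfl⟩ := CStarAlgebra.nonneg_iff_eq_star_mul_self.mp hA.nonneg
  rw [star_eq_conjTranspose, mul_assoc, trace_mul_comm]
  exact (hB.mul_mul_conjTranspose_same R).trace_nonneg

theorem trace_mul_le_trace_mul (hA : A.PosSemidef) (hBC : (B - C).PosSemidef) :
    (A * C).trace ≤ (A * B).trace := by
  simpa only [mul_sub, trace_sub, sub_nonneg] using hA.trace_mul_nonneg hBC

end Matrix.PosSemidef

theorem Matrix.sub_mulVec_dotProduct_mulVec_sub {m n R : Type*} [Fintype m] [Fintype n]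
    [CommRing R] (a : m → R) (C : Matrix m n R) (M : Matrix m m R) (d : n → R) :
    (a - C *ᵥ d) ⬝ᵥ M *ᵥ (a - C *ᵥ d) =
      a ⬝ᵥ M *ᵥ a - ((a ᵥ* M) ᵥ* C + (M *ᵥ a) ᵥ* C) ⬝ᵥ d + d ⬝ᵥ (Cᵀ * M * C) *ᵥ d := by
  have h₁ : a ⬝ᵥ M *ᵥ C *ᵥ d = (a ᵥ* M) ᵥ* C ⬝ᵥ d := by
    rw [dotProduct_mulVec, dotProduct_mulVec]
  have h₂ : C *ᵥ d ⬝ᵥ M *ᵥ a = (M *ᵥ a) ᵥ* C ⬝ᵥ d := by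
    rw [dotProduct_comm, dotProduct_mulVec]
  have h₃ : C *ᵥ d ⬝ᵥ M *ᵥ C *ᵥ d = d ⬝ᵥ (Cᵀ * M * C) *ᵥ d := by
    rw [← mulVec_mulVec, ← mulVec_mulVec, dotProduct_mulVec d, vecMul_transpose]
  simp only [mulVec_sub, sub_dotProduct, dotProduct_sub, add_dotProduct, h₁, h₂, h₃]
  ring

theorem Matrix.dotProduct_mulVec_eq_sum_sum {m n R : Type*} [Fintype m] [Fintype n]
    [CommSemiring R] (v : m → R) (A : Matrix m n R) (w : n → R) :
    v ⬝ᵥ A *ᵥ w = ∑ i, ∑ j, v i * A i j * w j := by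
  simp only [dotProduct, mulVec, Finset.mul_sum, mul_assoc]

section SecondMoment

variable {Ω ι : Type*} [MeasurableSpace Ω] {μ : Measure Ω} [Fintype ι] {v : Ω → ι → ℝ}

noncomputable def secondMoment (μ : Measure Ω) (v : Ω → ι → ℝ) : Matrix ι ι ℝ :=
  of fun i j => ∫ ω, v ω i * v ω j ∂μ

theorem integrable_dotProduct (hv : ∀ i, Integrable (fun ω => v ω i) μ) (c : ι → ℝ) :
    Integrable (fun ω => c ⬝ᵥ v ω) μ :=
  integrable_finsetSum _ fun i _ => (hv i).const_mul (c i)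

theorem integral_dotProduct (hv : ∀ i, Integrable (fun ω => v ω i) μ) (c : ι → ℝ) :
    ∫ ω, c ⬝ᵥ v ω ∂μ = c ⬝ᵥ fun i => ∫ ω, v ω i ∂μ := by
  simp only [dotProduct]
  rw [integral_finsetSum _ fun i _ => (hv i).const_mul (c i)]
  simp only [integral_const_mul]

theorem integrable_dotProduct_mulVec_self (hv : ∀ i, MemLp (fun ω => v ω i) 2 μ)
    (A : Matrix ι ι ℝ) : Integrable (fun ω => v ω ⬝ᵥ A *ᵥ v ω) μ := by
  simp only [dotProduct_mulVec_eq_sum_sum, mul_right_comm _ (A _ _)]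
  exact integrable_finsetSum _ fun i _ => integrable_finsetSum _ fun j _ =>
    ((hv i).integrable_mul (hv j)).mul_const _

theorem integral_dotProduct_mulVec_self (hv : ∀ i, MemLp (fun ω => v ω i) 2 μ)
    (A : Matrix ι ι ℝ) : ∫ ω, v ω ⬝ᵥ A *ᵥ v ω ∂μ = (A * secondMoment μ v).trace := by
  have hvv : ∀ i j, Integrable (fun ω => v ω i * v ω j * A i j) μ := fun i j =>
    ((hv i).integrable_mul (hv j)).mul_const _
  simp only [dotProduct_mulVec_eq_sum_sum, mul_right_comm _ (A _ _), trace, diag, mul_apply,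
    secondMoment, of_apply]
  rw [integral_finsetSum _ fun i _ => integrable_finsetSum _ fun j _ => hvv i j]
  refine Finset.sum_congr rfl fun i _ => ?_
  rw [integral_finsetSum _ fun j _ => hvv i j]
  refine Finset.sum_congr rfl fun j _ => ?_
  rw [integral_mul_const, mul_comm]
  exact congrArg _ (integral_congr_ae (ae_of_all _ fun ω => mul_comm _ _))

variable [IsProbabilityMeasure μ] {m : Type*} [Fintype m]

theorem integral_sub_mulVec_dotProduct_mulVec_sub (hv : ∀ i, MemLp (fun ω => v ω i) 2 μ)
    (hv₀ : ∀ i, ∫ ω, v ω i ∂μ = 0) (a : m → ℝ) (C : Matrix m ι ℝ) (M : Matrix m m ℝ) :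
    ∫ ω, (a - C *ᵥ v ω) ⬝ᵥ M *ᵥ (a - C *ᵥ v ω) ∂μ =
      a ⬝ᵥ M *ᵥ a + (Cᵀ * M * C * secondMoment μ v).trace := by
  have hv₁ : ∀ i, Integrable (fun ω => v ω i) μ := fun i => (hv i).integrable one_le_two
  set w := (a ᵥ* M) ᵥ* C + (M *ᵥ a) ᵥ* C
  have hlin : Integrable (fun ω => a ⬝ᵥ M *ᵥ a - w ⬝ᵥ v ω) μ :=
    (integrable_const _).sub (integrable_dotProduct hv₁ w)
  simp only [sub_mulVec_dotProduct_mulVec_sub]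
  rw [integral_add hlin (integrable_dotProduct_mulVec_self hv _),
    integral_sub (integrable_const _) (integrable_dotProduct hv₁ w), integral_const,
    integral_dotProduct hv₁, integral_dotProduct_mulVec_self hv]
  simp [hv₀]

end SecondMoment

theorem stmt4_general
    {Ω : Type*} [MeasurableSpace Ω] (μ : Measure Ω) [IsProbabilityMeasure μ]
    {n m : ℕ} (xhat : Ω → Fin n → ℝ)
    (hx : ∀ i, MemLp (fun ω => xhat ω i) 2 μ)
    (C : Matrix (Fin m) (Fin n) ℝ)
    (M : Matrix (Fin m) (Fin m) ℝ) (hM : M.PosSemidef)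
    (Z : Matrix (Fin n) (Fin n) ℝ)
    (hLB : ∀ xe : Fin n → ℝ,
      ((Matrix.of fun i j => ∫ ω, (xhat ω i - xe i) * (xhat ω j - xe j) ∂μ) - Z).PosSemidef) :
    (⨅ y : Fin m → ℝ,
        ∫ ω, (y - C.mulVec (xhat ω)) ⬝ᵥ M.mulVec (y - C.mulVec (xhat ω)) ∂μ) ≥
      (Cᵀ * M * C * Z).trace := by
  set e : Fin n → ℝ := fun i => ∫ ω, xhat ω i ∂μ
  have hcentred : ∀ i, MemLp (fun ω => (xhat ω - e) i) 2 μ := fun i => (hx i).sub (memLp_const _)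
  have hmean : ∀ i, ∫ ω, (xhat ω - e) i ∂μ = 0 := fun i => by
    simp [integral_sub ((hx i).integrable one_le_two) (integrable_const _), e]
  have hcov : (secondMoment μ (fun ω => xhat ω - e) - Z).PosSemidef := hLB e
  refine le_ciInf fun y => ?_
  have hsplit : ∀ ω, y - C *ᵥ xhat ω = (y - C *ᵥ e) - C *ᵥ (xhat ω - e) := fun ω => by
    rw [mulVec_sub]; abel
  simp only [hsplit, integral_sub_mulVec_dotProduct_mulVec_sub hcentred hmean]
  calc (Cᵀ * M * C * Z).trace ≤ (Cᵀ * M * C * secondMoment μ (fun ω => xhat ω - e)).trace :=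
        (hM.conjTranspose_mul_mul_same C).trace_mul_le_trace_mul hcov
    _ ≤ _ := le_add_of_nonneg_left (hM.dotProduct_mulVec_nonneg _)

/-- core inequality of Theorem 3 of the paper. If every constant estimator
`x̂ᵉ` of the square-integrable random vector `x̂` has error matrix `E[(x̂−x̂ᵉ)(x̂−x̂ᵉ)ᵀ] ⪰ Z`
in the Loewner order, then for every constant `y ∈ ℝ^m`,
`E[(y − C x̂)ᵀ M (y − C x̂)] ≥ tr (Cᵀ M C Z)`; hence the infimum over `y` is `≥ tr (Cᵀ M C Z)`. -/
theorem stmt4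
    {Ω : Type*} [MeasurableSpace Ω] (μ : Measure Ω) [IsProbabilityMeasure μ]
    {n m : ℕ} (xhat : Ω → Fin n → ℝ)
    (hx : ∀ i, MemLp (fun ω => xhat ω i) 2 μ)
    (C : Matrix (Fin m) (Fin n) ℝ)
    (M : Matrix (Fin m) (Fin m) ℝ) (hM : M.PosSemidef)
    (Z : Matrix (Fin n) (Fin n) ℝ) (hZ : Z.PosSemidef)
    (hLB : ∀ xe : Fin n → ℝ,
      ((Matrix.of fun i j => ∫ ω, (xhat ω i - xe i) * (xhat ω j - xe j) ∂μ) - Z).PosSemidef) :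
    (⨅ y : Fin m → ℝ,
        ∫ ω, (y - C.mulVec (xhat ω)) ⬝ᵥ M.mulVec (y - C.mulVec (xhat ω)) ∂μ) ≥
      (Cᵀ * M * C * Z).trace :=
  stmt4_general μ xhat hx C M hM Z hLB
end

section
/- Consider the closed-loop system x_{k+1} = A x_k + B u_k + w_k, y_k = C x_k + v_k with Kalman predictor x̂_{k+1|k} = A((I−KC) x̂_{k|k−1} + K y_k) + B u_k and any input sequence u_k. If an attacker adds input u_k^a and sensor bias s_k^a where x^a_{k+1} = A x^a_k + B u^a_k, x^a_0 = 0, s^a_k = −C x^a_k, and the plant evolves as x'_{k+1} = A x'_k + B(u_k + u^a_k) + w_k with x'_0 = x_0 and received outputs y'_k = C x'_k + v_k + s^a_k, then y'_k = y_k for all k (where y_k = C x_k + v_k is the unattacked output with x_{k+1} = A x_k + B u_k + w_k driven by the same noise realizations), and consequently the residue sequence z_k = y'_k − C x̂_{k|k−1} has the same distribution as under no attack. -/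
/-!
The attack state `x^a` is exactly the contribution of `u^a` to the plant, so by linearity the
attacked plant state is `x_k + x^a_k`, and the bias `-C x^a_k` removes that contribution from the
output. This needs the defender's inputs to agree in both runs, which holds by causality of the
policy as long as the outputs received so far agree; hence a strong induction. With identical
outputs and inputs, the Kalman predictor and the residues are identical too.
-/

open Matrix

section

variable {R ι μ π : Type*} [CommRing R] [Fintype ι] [Fintype π]

theorem mulVec_add_add_neg_mulVec (C : Matrix μ ι R) (x xa : ι → R) (v : μ → R) :
    C *ᵥ (x + xa) + v + -(C *ᵥ xa) = C *ᵥ x + v := by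
  rw [mulVec_add]
  abel

theorem attacked_state_eq_add_attack_state (A : Matrix ι ι R) (B : Matrix ι π R)
    (C : Matrix μ ι R) (w : ℕ → ι → R) (vm : ℕ → μ → R)
    (F : ℕ → (ℕ → μ → R) → π → R)
    (hF : ∀ k (g h : ℕ → μ → R), (∀ j, j ≤ k → g j = h j) → F k g = F k h)
    (x : ℕ → ι → R) (y : ℕ → μ → R)
    (hy : ∀ k, y k = C *ᵥ x k + vm k)
    (hx : ∀ k, x (k + 1) = A *ᵥ x k + B *ᵥ F k y + w k)
    (ua : ℕ → π → R) (xa : ℕ → ι → R)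
    (hxa0 : xa 0 = 0) (hxa : ∀ k, xa (k + 1) = A *ᵥ xa k + B *ᵥ ua k)
    (x' : ℕ → ι → R) (y' : ℕ → μ → R) (hx'0 : x' 0 = x 0)
    (hy' : ∀ k, y' k = C *ᵥ x' k + vm k + -(C *ᵥ xa k))
    (hx' : ∀ k, x' (k + 1) = A *ᵥ x' k + B *ᵥ (F k y' + ua k) + w k) (k : ℕ) :
    x' k = x k + xa k := by
  induction k using Nat.strong_induction_on with
  | _ k ih =>
    cases k with
    | zero => rw [hx'0, hxa0, add_zero]
    | succ k =>
      have hout : ∀ j, j ≤ k → y' j = y j := fun j hj => by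
        rw [hy', hy, ih j (Nat.lt_succ_of_le hj), mulVec_add_add_neg_mulVec]
      rw [hx', hx, hxa, ih k k.lt_succ_self, hF k y' y hout, mulVec_add, mulVec_add]
      abel

theorem kalman_predictor_eq_of_outputs_eq (A : Matrix ι ι R) (B : Matrix ι π R)
    (C : Matrix μ ι R) (K : Matrix ι μ R) [Fintype μ] [DecidableEq ι]
    (F : ℕ → (ℕ → μ → R) → π → R) (y y' : ℕ → μ → R) (hyy : y' = y)
    (xh xh' : ℕ → ι → R) (hxh'0 : xh' 0 = xh 0)
    (hxh : ∀ k, xh (k + 1) = A *ᵥ ((1 - K * C) *ᵥ xh k + K *ᵥ y k) + B *ᵥ F k y)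
    (hxh' : ∀ k, xh' (k + 1) = A *ᵥ ((1 - K * C) *ᵥ xh' k + K *ᵥ y' k) + B *ᵥ F k y')
    (k : ℕ) : xh' k = xh k := by
  subst hyy
  induction k with
  | zero => exact hxh'0
  | succ k ih => rw [hxh', hxh, ih]

end

theorem stmt9_general {n m p : ℕ}
    (A : Matrix (Fin n) (Fin n) ℝ) (B : Matrix (Fin n) (Fin p) ℝ)
    (C : Matrix (Fin m) (Fin n) ℝ) (K : Matrix (Fin n) (Fin m) ℝ)
    -- fixed noise realizations
    (w : ℕ → Fin n → ℝ) (vm : ℕ → Fin m → ℝ)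
    -- the defender's (causal) control policy, a function of received outputs
    (F : ℕ → (ℕ → Fin m → ℝ) → Fin p → ℝ)
    (hF : ∀ k (g h : ℕ → Fin m → ℝ), (∀ j, j ≤ k → g j = h j) → F k g = F k h)
    -- nominal (unattacked) trajectories
    (x : ℕ → Fin n → ℝ) (y : ℕ → Fin m → ℝ) (xh : ℕ → Fin n → ℝ) (z : ℕ → Fin m → ℝ)
    (hy : ∀ k, y k = C.mulVec (x k) + vm k)
    (hx : ∀ k, x (k + 1) = A.mulVec (x k) + B.mulVec (F k y) + w k)
    (hxh : ∀ k, xh (k + 1) =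
      A.mulVec ((1 - K * C).mulVec (xh k) + K.mulVec (y k)) + B.mulVec (F k y))
    (hz : ∀ k, z k = y k - C.mulVec (xh k))
    -- attacker's input and attack state
    (ua : ℕ → Fin p → ℝ) (xa : ℕ → Fin n → ℝ)
    (hxa0 : xa 0 = 0) (hxa : ∀ k, xa (k + 1) = A.mulVec (xa k) + B.mulVec (ua k))
    -- attacked trajectories: plant driven by `u_k + u^a_k`, outputs biased by `s^a_k = −C x^a_k`
    (x' : ℕ → Fin n → ℝ) (y' : ℕ → Fin m → ℝ) (xh' : ℕ → Fin n → ℝ) (z' : ℕ → Fin m → ℝ)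
    (hx'0 : x' 0 = x 0) (hxh'0 : xh' 0 = xh 0)
    (hy' : ∀ k, y' k = C.mulVec (x' k) + vm k + (- C.mulVec (xa k)))
    (hx' : ∀ k, x' (k + 1) = A.mulVec (x' k) + B.mulVec (F k y' + ua k) + w k)
    (hxh' : ∀ k, xh' (k + 1) =
      A.mulVec ((1 - K * C).mulVec (xh' k) + K.mulVec (y' k)) + B.mulVec (F k y'))
    (hz' : ∀ k, z' k = y' k - C.mulVec (xh' k)) :
    ∀ k, y' k = y k ∧ z' k = z k := by
  have hstate := attacked_state_eq_add_attack_state A B C w vm F hF x y hy hx ua xa hxa0 hxa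
    x' y' hx'0 hy' hx'
  have hout : y' = y := funext fun k => by
    rw [hy', hy, hstate, mulVec_add_add_neg_mulVec]
  have hpred := kalman_predictor_eq_of_outputs_eq A B C K F y y' hout xh xh' hxh'0 hxh hxh'
  intro k
  exact ⟨congrFun hout k, by rw [hz', hz, hout, hpred]⟩

/-- undetectable attack. In the closed loop
`x_{k+1} = A x_k + B u_k + w_k`, `y_k = C x_k + v_k` with Kalman predictor
`x̂_{k+1|k} = A((I−KC) x̂_{k|k−1} + K y_k) + B u_k`, where the defender's input is a causal
function `F` of the received outputs, an attacker injecting `u^a_k` with sensor bias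
`s^a_k = −C x^a_k`, `x^a_{k+1} = A x^a_k + B u^a_k`, `x^a_0 = 0`, leaves the received
outputs—and hence the residues—unchanged: `y'_k = y_k` and `z'_k = z_k` for all `k`. -/
theorem stmt9 {n m p : ℕ}
    (A : Matrix (Fin n) (Fin n) ℝ) (B : Matrix (Fin n) (Fin p) ℝ)
    (C : Matrix (Fin m) (Fin n) ℝ) (K : Matrix (Fin n) (Fin m) ℝ)
    -- fixed noise realizations
    (w v : ℕ → Fin n → ℝ) (vm : ℕ → Fin m → ℝ)
    -- the defender's (causal) control policy, a function of received outputs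
    (F : ℕ → (ℕ → Fin m → ℝ) → Fin p → ℝ)
    (hF : ∀ k (g h : ℕ → Fin m → ℝ), (∀ j, j ≤ k → g j = h j) → F k g = F k h)
    -- nominal (unattacked) trajectories
    (x : ℕ → Fin n → ℝ) (y : ℕ → Fin m → ℝ) (xh : ℕ → Fin n → ℝ) (z : ℕ → Fin m → ℝ)
    (hy : ∀ k, y k = C.mulVec (x k) + vm k)
    (hx : ∀ k, x (k + 1) = A.mulVec (x k) + B.mulVec (F k y) + w k)
    (hxh : ∀ k, xh (k + 1) =
      A.mulVec ((1 - K * C).mulVec (xh k) + K.mulVec (y k)) + B.mulVec (F k y))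
    (hz : ∀ k, z k = y k - C.mulVec (xh k))
    -- attacker's input and attack state
    (ua : ℕ → Fin p → ℝ) (xa : ℕ → Fin n → ℝ)
    (hxa0 : xa 0 = 0) (hxa : ∀ k, xa (k + 1) = A.mulVec (xa k) + B.mulVec (ua k))
    -- attacked trajectories: plant driven by `u_k + u^a_k`, outputs biased by `s^a_k = −C x^a_k`
    (x' : ℕ → Fin n → ℝ) (y' : ℕ → Fin m → ℝ) (xh' : ℕ → Fin n → ℝ) (z' : ℕ → Fin m → ℝ)
    (hx'0 : x' 0 = x 0) (hxh'0 : xh' 0 = xh 0)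
    (hy' : ∀ k, y' k = C.mulVec (x' k) + vm k + (- C.mulVec (xa k)))
    (hx' : ∀ k, x' (k + 1) = A.mulVec (x' k) + B.mulVec (F k y' + ua k) + w k)
    (hxh' : ∀ k, xh' (k + 1) =
      A.mulVec ((1 - K * C).mulVec (xh' k) + K.mulVec (y' k)) + B.mulVec (F k y'))
    (hz' : ∀ k, z' k = y' k - C.mulVec (xh' k)) :
    ∀ k, y' k = y k ∧ z' k = z k :=
  stmt9_general A B C K w vm F hF x y xh z hy hx hxh hz ua xa hxa0 hxa x' y' xh' z' hx'0 hxh'0 hy'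
    hx' hxh' hz'
end

section
/- In the undetectable attack of the previous setting (x^a_{k+1} = A x^a_k + B u^a_k, x^a_0 = 0), the attacked plant state satisfies x'_k = x_k + x^a_k for all k, where x_k is the nominal state driven by the same noise and inputs u_k. Hence if A has an eigenvalue with modulus greater than 1 and the attacker chooses u^a_k to excite the corresponding unstable mode (i.e., x^a_k is unbounded), the state deviation x'_k − x_k grows unboundedly while the outputs received by the operator are unchanged. -/
open Matrix

theorem recurrence_superposition {M : Type*} [AddCommMonoid M] (f : M →+ M)
    {x y z a b : ℕ → M} (hx : ∀ k, x (k + 1) = f (x k) + a k)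
    (hy : ∀ k, y (k + 1) = f (y k) + b k) (hz : ∀ k, z (k + 1) = f (z k) + (a k + b k))
    (h0 : z 0 = x 0 + y 0) : ∀ k, z k = x k + y k := by
  intro k
  induction k with
  | zero => exact h0
  | succ k ih =>
    rw [hz, hx, hy, ih, map_add]
    abel

/-- In the undetectable attack (`x^a_{k+1} = A x^a_k + B u^a_k`, `x^a_0 = 0`),
the attacked plant state satisfies `x'_k = x_k + x^a_k` for all `k`, so if the attacker excites
an unstable mode (i.e. `x^a_k` is unbounded) the deviation `x'_k − x_k` grows unboundedly while
the outputs received by the operator are unchanged (`y'_k = y_k`). -/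
theorem stmt10 {n m p : ℕ}
    (A : Matrix (Fin n) (Fin n) ℝ) (B : Matrix (Fin n) (Fin p) ℝ)
    (C : Matrix (Fin m) (Fin n) ℝ)
    (w : ℕ → Fin n → ℝ) (vm : ℕ → Fin m → ℝ) (u : ℕ → Fin p → ℝ)
    -- nominal state and output
    (x : ℕ → Fin n → ℝ) (y : ℕ → Fin m → ℝ)
    (hx : ∀ k, x (k + 1) = A.mulVec (x k) + B.mulVec (u k) + w k)
    (hy : ∀ k, y k = C.mulVec (x k) + vm k)
    -- attack state driven by the attacker's input
    (ua : ℕ → Fin p → ℝ) (xa : ℕ → Fin n → ℝ)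
    (hxa0 : xa 0 = 0) (hxa : ∀ k, xa (k + 1) = A.mulVec (xa k) + B.mulVec (ua k))
    -- attacked state and received outputs (bias `s^a_k = −C x^a_k`)
    (x' : ℕ → Fin n → ℝ) (y' : ℕ → Fin m → ℝ)
    (hx'0 : x' 0 = x 0)
    (hx' : ∀ k, x' (k + 1) = A.mulVec (x' k) + B.mulVec (u k + ua k) + w k)
    (hy' : ∀ k, y' k = C.mulVec (x' k) + vm k + (- C.mulVec (xa k))) :
    (∀ k, x' k = x k + xa k) ∧ (∀ k, y' k = y k) ∧
      ((¬ ∃ R : ℝ, ∀ k, ‖xa k‖ ≤ R) → ¬ ∃ R : ℝ, ∀ k, ‖x' k - x k‖ ≤ R) := by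
  have hstate : ∀ k, x' k = x k + xa k :=
    recurrence_superposition A.mulVecLin.toAddMonoidHom (a := fun k => B *ᵥ u k + w k)
      (b := fun k => B *ᵥ ua k) (fun k => (hx k).trans (add_assoc ..)) hxa
      (fun k => by
        simp only [hx' k, mulVec_add, LinearMap.toAddMonoidHom_coe, mulVecLin_apply]
        abel)
      (by rw [hx'0, hxa0, add_zero])
  refine ⟨hstate, fun k => ?_, fun hunb => ?_⟩
  · rw [hy', hy, hstate, mulVec_add]
    abel
  · simpa only [hstate, add_sub_cancel_left] using hunb
end

section
/- Let Σ ⪰ 0 be positive semidefinite in R^{m×m}, G a sub-sigma-algebra, y a G-measurable random vector and x̂ a square-integrable random vector in R^n, C_k a G-measurable random m×n matrix with bounded entries. Then s* = E[C_k x̂ | G] − y satisfies: for all G-measurable square-integrable s, E[(y + s* − C_k x̂)^T Σ (y + s* − C_k x̂)] ≤ E[(y + s − C_k x̂)^T Σ (y + s − C_k x̂)] provided Σ is positive definite; for merely positive semidefinite Σ, s* is a (possibly non-unique) minimizer. -/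
/-! Write `S = Bᴴ B`, so that the quadratic residue statistic of a residue `e` is `∑ᵢ ((B e)ᵢ)²`.
The residue of a forgery `s` splits as `u + v` with `u = y + s - E[C x̂ | G]` `G`-measurable and
`v = E[C x̂ | G] - C x̂` the residue of `s*`. Every component of `B v` has zero conditional
expectation given `G`, so it is `L²`-orthogonal to the `G`-measurable `(B u)ᵢ`; hence
`E ((B (u + v))ᵢ)² = E ((B u)ᵢ)² + E ((B v)ᵢ)² ≥ E ((B v)ᵢ)²`. -/

open MeasureTheory ProbabilityTheory Matrix

lemma dotProduct_conjTranspose_mul_self_mulVec {ι κ : Type*} [Fintype ι] [Fintype κ]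
    (B : Matrix κ ι ℝ) (w : ι → ℝ) :
    w ⬝ᵥ (Bᴴ * B) *ᵥ w = ∑ i, (B *ᵥ w) i ^ 2 := by
  rw [← mulVec_mulVec, dotProduct_mulVec, conjTranspose_eq_transpose_of_trivial, vecMul_transpose]
  simp [dotProduct, sq]

section
variable {Ω ι κ : Type*} [Fintype κ] {m m₀ : MeasurableSpace Ω} {μ : Measure Ω}

open scoped ENNReal in
lemma memLp_mulVec_apply {p : ℝ≥0∞} {C : Ω → Matrix ι κ ℝ} (hC : ∀ i j, MemLp (C · i j) ∞ μ)
    {x : Ω → κ → ℝ} (hx : ∀ j, MemLp (x · j) p μ) (i : ι) :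
    MemLp (fun ω => (C ω *ᵥ x ω) i) p μ := by
  simp only [mulVec, dotProduct]
  exact memLp_finsetSum _ fun j _ => (hx j).mul' (r := p) (hC i j)

lemma stronglyMeasurable_mulVec_apply (B : Matrix ι κ ℝ) {u : Ω → κ → ℝ}
    (hu : ∀ j, StronglyMeasurable[m] (u · j)) (i : ι) :
    StronglyMeasurable[m] fun ω => (B *ᵥ u ω) i := by
  simp only [mulVec, dotProduct]
  exact Finset.stronglyMeasurable_fun_sum _ fun j _ => stronglyMeasurable_const.mul (hu j)

lemma condExp_mulVec_apply_eq_zero (B : Matrix ι κ ℝ) {v : Ω → κ → ℝ}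
    (hv : ∀ j, Integrable (v · j) μ) (hv0 : ∀ j, μ[(v · j)|m] =ᵐ[μ] 0) (i : ι) :
    μ[fun ω => (B *ᵥ v ω) i | m] =ᵐ[μ] 0 := by
  have hsum : (fun ω => (B *ᵥ v ω) i) = ∑ j, B i j • (v · j) := by
    ext ω; simp [mulVec, dotProduct]
  rw [hsum]
  refine (condExp_finsetSum (fun j _ => (hv j).smul (B i j)) m).trans ?_
  have hterm : ∀ j, μ[B i j • (v · j)|m] =ᵐ[μ] 0 := fun j => by
    filter_upwards [condExp_smul (B i j) (v · j) m, hv0 j] with ω h h0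
    simp [h, h0]
  simpa using eventuallyEq_sum (s := Finset.univ) fun j _ => hterm j

lemma integral_mul_eq_zero_of_condExp_eq_zero [IsFiniteMeasure μ] (hm : m ≤ m₀) {u v : Ω → ℝ}
    (hu : StronglyMeasurable[m] u) (hu₂ : MemLp u 2 μ) (hv : MemLp v 2 μ)
    (hv0 : μ[v|m] =ᵐ[μ] 0) : ∫ ω, u ω * v ω ∂μ = 0 := by
  calc ∫ ω, u ω * v ω ∂μ = ∫ ω, μ[u * v|m] ω ∂μ := (integral_condExp hm).symm
    _ = 0 := by
      refine integral_eq_zero_of_ae ((condExp_mul_of_stronglyMeasurable_left hu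
        (hu₂.integrable_mul hv) (hv.integrable one_le_two)).trans ?_)
      filter_upwards [hv0] with ω hω
      simp [hω]

lemma integral_sq_le_integral_add_sq_of_condExp_eq_zero [IsFiniteMeasure μ] (hm : m ≤ m₀)
    {u v : Ω → ℝ} (hu : StronglyMeasurable[m] u) (hv : MemLp v 2 μ) (hv0 : μ[v|m] =ᵐ[μ] 0)
    (huv : MemLp (fun ω => u ω + v ω) 2 μ) :
    ∫ ω, v ω ^ 2 ∂μ ≤ ∫ ω, (u ω + v ω) ^ 2 ∂μ := by
  have hu₂ : MemLp u 2 μ := by convert huv.sub hv using 1; ext ω; simp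
  have hcross := integral_mul_eq_zero_of_condExp_eq_zero hm hu hu₂ hv hv0
  have huv₁ : Integrable (fun ω => 2 * (u ω * v ω)) μ := (hu₂.integrable_mul hv).const_mul 2
  have hint : Integrable (fun ω => u ω ^ 2 + 2 * (u ω * v ω)) μ := hu₂.integrable_sq.add huv₁
  calc ∫ ω, v ω ^ 2 ∂μ ≤ ∫ ω, u ω ^ 2 + 2 * (u ω * v ω) ∂μ + ∫ ω, v ω ^ 2 ∂μ := by
        rw [integral_add hu₂.integrable_sq huv₁,
          integral_const_mul, hcross, mul_zero, add_zero]
        exact le_add_of_nonneg_left (integral_nonneg fun ω => sq_nonneg _)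
    _ = ∫ ω, (u ω + v ω) ^ 2 ∂μ := by
        rw [← integral_add hint hv.integrable_sq]
        congr 1 with ω
        ring

lemma memLp_two_of_integrable_sum_sq [Fintype ι] {f : Ω → ι → ℝ}
    (hf : ∀ i, AEStronglyMeasurable (f · i) μ) (h : Integrable (fun ω => ∑ i, f ω i ^ 2) μ)
    (i : ι) : MemLp (f · i) 2 μ := by
  refine (memLp_two_iff_integrable_sq (hf i)).2 (h.mono' ((hf i).pow 2) (ae_of_all _ fun ω => ?_))
  rw [Real.norm_eq_abs, abs_of_nonneg (sq_nonneg _)]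
  exact Finset.single_le_sum (f := fun j => f ω j ^ 2) (fun j _ => sq_nonneg _) (Finset.mem_univ i)

open scoped MatrixOrder in
theorem integral_quadForm_le_of_condExp_eq_zero [Fintype ι] [IsFiniteMeasure μ] (hm : m ≤ m₀)
    {S : Matrix ι ι ℝ} (hS : S.PosSemidef) {u v : Ω → ι → ℝ}
    (hu : ∀ i, StronglyMeasurable[m] (u · i)) (hv : ∀ i, MemLp (v · i) 2 μ)
    (hv0 : ∀ i, μ[(v · i)|m] =ᵐ[μ] 0)
    (huv : Integrable (fun ω => (u ω + v ω) ⬝ᵥ S *ᵥ (u ω + v ω)) μ) :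
    ∫ ω, v ω ⬝ᵥ S *ᵥ v ω ∂μ ≤ ∫ ω, (u ω + v ω) ⬝ᵥ S *ᵥ (u ω + v ω) ∂μ := by
  classical
  obtain ⟨B, rfl⟩ := CStarAlgebra.nonneg_iff_eq_star_mul_self.mp hS.nonneg
  have hBu i : StronglyMeasurable[m] fun ω => (B *ᵥ u ω) i :=
    stronglyMeasurable_mulVec_apply B hu i
  have hBv i : MemLp (fun ω => (B *ᵥ v ω) i) 2 μ :=
    memLp_mulVec_apply (fun i j => memLp_top_const (B i j)) hv i
  have hBv0 i : μ[fun ω => (B *ᵥ v ω) i | m] =ᵐ[μ] 0 :=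
    condExp_mulVec_apply_eq_zero B (fun j => (hv j).integrable one_le_two) hv0 i
  simp only [star_eq_conjTranspose, dotProduct_conjTranspose_mul_self_mulVec] at huv ⊢
  simp only [mulVec_add, Pi.add_apply] at huv ⊢
  have hBuv := memLp_two_of_integrable_sum_sq (f := fun ω i => (B *ᵥ u ω) i + (B *ᵥ v ω) i)
    (fun i => ((hBu i).mono hm).aestronglyMeasurable.add (hBv i).1) huv
  rw [integral_finsetSum _ fun i _ => (hBv i).integrable_sq,
    integral_finsetSum _ fun i _ => (hBuv i).integrable_sq]
  exact Finset.sum_le_sum fun i _ =>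
    integral_sq_le_integral_add_sq_of_condExp_eq_zero hm (hBu i) (hBv i) (hBv0 i) (hBuv i)

lemma condExp_condExp_sub_self (hm : m ≤ m₀) [SigmaFinite (μ.trim hm)] {f : Ω → ℝ}
    (hf : Integrable f μ) : μ[μ[f|m] - f | m] =ᵐ[μ] 0 := by
  filter_upwards [condExp_sub integrable_condExp hf m] with ω hω
  rw [hω, Pi.sub_apply, condExp_of_stronglyMeasurable hm stronglyMeasurable_condExp
    integrable_condExp, sub_self, Pi.zero_apply]

end

theorem stmt19_general
    {Ω : Type*} {mΩ : MeasurableSpace Ω} (μ : Measure Ω) [IsProbabilityMeasure μ]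
    {n m : ℕ} (G : MeasurableSpace Ω) (hG : G ≤ mΩ)
    (S : Matrix (Fin m) (Fin m) ℝ) (hS : S.PosSemidef)
    (y : Ω → Fin m → ℝ) (hy : ∀ i, StronglyMeasurable[G] (fun ω => y ω i))
    (xhat : Ω → Fin n → ℝ) (hxhat : ∀ i, MemLp (fun ω => xhat ω i) 2 μ)
    (Ck : Ω → Matrix (Fin m) (Fin n) ℝ)
    (hCkmeas : ∀ i j, StronglyMeasurable[G] (fun ω => Ck ω i j))
    (hCkbdd : ∃ R : ℝ, ∀ ω i j, |Ck ω i j| ≤ R)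
    -- the optimal forged bias `s* = E[C_k x̂ | G] − y`
    (sstar : Ω → Fin m → ℝ)
    (hsstar : ∀ i, (fun ω => sstar ω i) =ᵐ[μ]
      fun ω => (μ[fun ω' => (Ck ω').mulVec (xhat ω') i | G]) ω - y ω i) :
    ∀ s : Ω → Fin m → ℝ, (∀ i, StronglyMeasurable[G] (fun ω => s ω i)) →
      (∀ i, MemLp (fun ω => s ω i) 2 μ) →
      Integrable (fun ω =>
        (y ω + s ω - (Ck ω).mulVec (xhat ω)) ⬝ᵥ
          S.mulVec (y ω + s ω - (Ck ω).mulVec (xhat ω))) μ →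
      (∫ ω, (y ω + sstar ω - (Ck ω).mulVec (xhat ω)) ⬝ᵥ
          S.mulVec (y ω + sstar ω - (Ck ω).mulVec (xhat ω)) ∂μ) ≤
        ∫ ω, (y ω + s ω - (Ck ω).mulVec (xhat ω)) ⬝ᵥ
          S.mulVec (y ω + s ω - (Ck ω).mulVec (xhat ω)) ∂μ := by
  intro s hs _ hres
  obtain ⟨R, hR⟩ := hCkbdd
  set z : Ω → Fin m → ℝ := fun ω => Ck ω *ᵥ xhat ω
  set c : Ω → Fin m → ℝ := fun ω i => μ[(z · i)|G] ω
  have hz : ∀ i, MemLp (z · i) 2 μ := memLp_mulVec_apply (fun i j =>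
    memLp_top_of_bound ((hCkmeas i j).mono hG).aestronglyMeasurable R
      (ae_of_all _ fun ω => hR ω i j)) hxhat
  have hstar : (fun ω => y ω + sstar ω - z ω) =ᵐ[μ] fun ω => c ω - z ω := by
    filter_upwards [ae_all_iff.2 hsstar] with ω hω
    ext i
    simp [hω i, c, z]
  calc _ = ∫ ω, (c ω - z ω) ⬝ᵥ S *ᵥ (c ω - z ω) ∂μ :=
        integral_congr_ae (hstar.mono fun ω h => congrArg (fun w => w ⬝ᵥ S *ᵥ w) h)
    _ ≤ ∫ ω, (y ω + s ω - c ω + (c ω - z ω)) ⬝ᵥ S *ᵥ (y ω + s ω - c ω + (c ω - z ω)) ∂μ :=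
        integral_quadForm_le_of_condExp_eq_zero hG hS
          (fun i => ((hy i).add (hs i)).sub stronglyMeasurable_condExp)
          (fun i => ((hz i).condExp one_le_two).sub (hz i))
          (fun i => condExp_condExp_sub_self hG ((hz i).integrable one_le_two))
          (by simpa only [sub_add_sub_cancel] using hres)
    _ = _ := by simp only [sub_add_sub_cancel, z]

/-- Theorem 2 of the paper, with random output matrix `C_k`. With `G` the
attacker's information σ-algebra, `y` `G`-measurable, `x̂` square-integrable and `C_k` a bounded
`G`-measurable random matrix, the forged bias `s* = E[C_k x̂ | G] − y` minimizes the expected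
quadratic residue statistic over all `G`-measurable square-integrable forgeries `s`:
`E[(y + s* − C_k x̂)ᵀ Σ (y + s* − C_k x̂)] ≤ E[(y + s − C_k x̂)ᵀ Σ (y + s − C_k x̂)]`. -/
theorem stmt19
    {Ω : Type*} {mΩ : MeasurableSpace Ω} (μ : Measure Ω) [IsProbabilityMeasure μ]
    {n m : ℕ} (G : MeasurableSpace Ω) (hG : G ≤ mΩ)
    (S : Matrix (Fin m) (Fin m) ℝ) (hS : S.PosSemidef)
    (y : Ω → Fin m → ℝ) (hy : ∀ i, StronglyMeasurable[G] (fun ω => y ω i))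
    (xhat : Ω → Fin n → ℝ) (hxhat : ∀ i, MemLp (fun ω => xhat ω i) 2 μ)
    (Ck : Ω → Matrix (Fin m) (Fin n) ℝ)
    (hCkmeas : ∀ i j, StronglyMeasurable[G] (fun ω => Ck ω i j))
    (hCkbdd : ∃ R : ℝ, ∀ ω i j, |Ck ω i j| ≤ R)
    -- the optimal forged bias `s* = E[C_k x̂ | G] − y`
    (sstar : Ω → Fin m → ℝ)
    (hsstar : ∀ i, (fun ω => sstar ω i) =ᵐ[μ]
      fun ω => (μ[fun ω' => (Ck ω').mulVec (xhat ω') i | G]) ω - y ω i)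
    (hintstar : Integrable (fun ω =>
      (y ω + sstar ω - (Ck ω).mulVec (xhat ω)) ⬝ᵥ
        S.mulVec (y ω + sstar ω - (Ck ω).mulVec (xhat ω))) μ) :
    ∀ s : Ω → Fin m → ℝ, (∀ i, StronglyMeasurable[G] (fun ω => s ω i)) →
      (∀ i, MemLp (fun ω => s ω i) 2 μ) →
      Integrable (fun ω =>
        (y ω + s ω - (Ck ω).mulVec (xhat ω)) ⬝ᵥ
          S.mulVec (y ω + s ω - (Ck ω).mulVec (xhat ω))) μ →
      (∫ ω, (y ω + sstar ω - (Ck ω).mulVec (xhat ω)) ⬝ᵥ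
          S.mulVec (y ω + sstar ω - (Ck ω).mulVec (xhat ω)) ∂μ) ≤
        ∫ ω, (y ω + s ω - (Ck ω).mulVec (xhat ω)) ⬝ᵥ
          S.mulVec (y ω + s ω - (Ck ω).mulVec (xhat ω)) ∂μ :=
  stmt19_general μ G hG S hS y hy xhat hxhat Ck hCkmeas hCkbdd sstar hsstar
end
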